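/- arXiv:1209.4741 — 3 statements merged into one kernel-verified Lean document; each statement's English description precedes it below -/
import Mathlib

section
/- Let V ⊆ ℝ^d be a compact set, w : V → ℝ a nonnegative continuous function with nonempty zero set C = {z ∈ V : w(z) = 0}, δ > 0, and w^δ(y) = min_{z∈V} (w(z) + |y−z|²/(2δ)). If y ∈ V is a point at which w^δ is differentiable, then |Dw^δ(y)| ≤ dist(y, C)/δ. -/
/-!
Let `z` be a minimiser in the definition of `w^δ(y)`. The paraboloid
`x ↦ w(z) + |x - z|²/(2δ)` lies above `w^δ` and touches it at `y`, so at a point of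
differentiability the two derivatives agree: `Dw^δ(y) = (y - z)/δ`. Comparing with the value
`|y - c|²/(2δ)` of the competitor `c ∈ C` and using `w(z) ≥ 0` gives `|y - z| ≤ |y - c|`.
-/

open Metric Set

/-- The infimal convolution of `w` over `V` with quadratic kernel `|·|²/(2δ)`. -/
noncomputable def infConv {d : ℕ} (V : Set (EuclideanSpace ℝ (Fin d)))
    (w : EuclideanSpace ℝ (Fin d) → ℝ) (δ : ℝ) (y : EuclideanSpace ℝ (Fin d)) : ℝ :=
  sInf ((fun z => w z + ‖y - z‖ ^ 2 / (2 * δ)) '' V)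

theorem HasFDerivAt.eq_of_le_of_eq {E : Type*} [NormedAddCommGroup E] [NormedSpace ℝ E]
    {f g : E → ℝ} {f' g' : E →L[ℝ] ℝ} {x : E} (hf : HasFDerivAt f f' x)
    (hg : HasFDerivAt g g' x) (hle : ∀ᶠ y in nhds x, f y ≤ g y) (heq : f x = g x) :
    f' = g' := by
  have hmax : IsLocalMax (f - g) x :=
    hle.mono fun y hy => by simpa only [Pi.sub_apply, heq, sub_self, sub_nonpos] using hy
  exact sub_eq_zero.mp (hmax.hasFDerivAt_eq_zero (hf.sub hg))

theorem hasFDerivAt_add_norm_sub_sq_div {E : Type*} [NormedAddCommGroup E]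
    [InnerProductSpace ℝ E] (a δ : ℝ) (z y : E) :
    HasFDerivAt (fun x => a + ‖x - z‖ ^ 2 / (2 * δ)) (δ⁻¹ • innerSL ℝ (y - z)) y := by
  have h := (((hasFDerivAt_id y).sub_const z).norm_sq.mul_const (2 * δ)⁻¹).const_add a
  simp only [id, ← div_eq_mul_inv] at h
  refine h.congr_fderiv ?_
  ext v
  simp
  ring

section infConv

variable {d : ℕ} {V : Set (EuclideanSpace ℝ (Fin d))} {w : EuclideanSpace ℝ (Fin d) → ℝ}
  {δ : ℝ}

theorem infConv_le (hw : ∀ z ∈ V, 0 ≤ w z) (hδ : 0 ≤ δ) (x : EuclideanSpace ℝ (Fin d))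
    {z : EuclideanSpace ℝ (Fin d)} (hz : z ∈ V) :
    infConv V w δ x ≤ w z + ‖x - z‖ ^ 2 / (2 * δ) := by
  refine csInf_le ⟨0, ?_⟩ ⟨z, hz, rfl⟩
  rintro _ ⟨u, hu, rfl⟩
  exact add_nonneg (hw u hu) (by positivity)

theorem exists_infConv_eq (hV : IsCompact V) (hV' : V.Nonempty) (hwc : ContinuousOn w V)
    (δ : ℝ) (y : EuclideanSpace ℝ (Fin d)) :
    ∃ z ∈ V, infConv V w δ y = w z + ‖y - z‖ ^ 2 / (2 * δ) := by
  have hcont : ContinuousOn (fun z => w z + ‖y - z‖ ^ 2 / (2 * δ)) V :=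
    hwc.add (by fun_prop)
  obtain ⟨z, hz, hmin⟩ := hV.exists_isMinOn hV' hcont
  exact ⟨z, hz, IsLeast.csInf_eq ⟨mem_image_of_mem _ hz, forall_mem_image.mpr hmin⟩⟩

theorem norm_sub_le_infDist_of_infConv_eq (hw : ∀ z ∈ V, 0 ≤ w z)
    (hC : {z ∈ V | w z = 0}.Nonempty) (hδ : 0 < δ) {y z : EuclideanSpace ℝ (Fin d)}
    (hz : z ∈ V) (hyz : infConv V w δ y = w z + ‖y - z‖ ^ 2 / (2 * δ)) :
    ‖y - z‖ ≤ infDist y {z ∈ V | w z = 0} := by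
  refine (le_infDist hC).mpr fun c ⟨hcV, hcw⟩ => ?_
  have hcomp := infConv_le hw hδ.le y hcV
  rw [hyz, hcw, zero_add] at hcomp
  have hsq : ‖y - z‖ ^ 2 / (2 * δ) ≤ ‖y - c‖ ^ 2 / (2 * δ) := by linarith [hw z hz]
  rw [div_le_div_iff_of_pos_right (by positivity),
    sq_le_sq₀ (norm_nonneg _) (norm_nonneg _)] at hsq
  rwa [dist_eq_norm]

end infConv

theorem stmt_2_general {d : ℕ} (V : Set (EuclideanSpace ℝ (Fin d)))
    (hV : IsCompact V)
    (w : EuclideanSpace ℝ (Fin d) → ℝ)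
    (hwc : ContinuousOn w V)
    (hw : ∀ y ∈ V, 0 ≤ w y)
    (hC : {z ∈ V | w z = 0}.Nonempty)
    (δ : ℝ) (hδ : 0 < δ)
    (y : EuclideanSpace ℝ (Fin d))
    (hdiff : DifferentiableAt ℝ (infConv V w δ) y) :
    ‖fderiv ℝ (infConv V w δ) y‖ ≤ Metric.infDist y {z ∈ V | w z = 0} / δ := by
  obtain ⟨z, hz, hyz⟩ := exists_infConv_eq hV (hC.mono fun _ h => h.1) hwc δ y
  have hderiv : fderiv ℝ (infConv V w δ) y = δ⁻¹ • innerSL ℝ (y - z) :=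
    hdiff.hasFDerivAt.eq_of_le_of_eq (hasFDerivAt_add_norm_sub_sq_div (w z) δ z y)
      (Filter.Eventually.of_forall fun x => infConv_le hw hδ.le x hz) hyz
  rw [hderiv, norm_smul, innerSL_apply_norm, norm_inv, Real.norm_of_nonneg hδ.le,
    inv_mul_eq_div]
  gcongr
  exact norm_sub_le_infDist_of_infConv_eq hw hC hδ hz hyz

theorem stmt_2 {d : ℕ} (V : Set (EuclideanSpace ℝ (Fin d)))
    (hV : IsCompact V)
    (w : EuclideanSpace ℝ (Fin d) → ℝ)
    (hwc : ContinuousOn w V)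
    (hw : ∀ y ∈ V, 0 ≤ w y)
    (hC : {z ∈ V | w z = 0}.Nonempty)
    (δ : ℝ) (hδ : 0 < δ)
    (y : EuclideanSpace ℝ (Fin d)) (hy : y ∈ V)
    (hdiff : DifferentiableAt ℝ (infConv V w δ) y) :
    ‖fderiv ℝ (infConv V w δ) y‖ ≤ Metric.infDist y {z ∈ V | w z = 0} / δ :=
  stmt_2_general V hV w hwc hw hC δ hδ y hdiff
end

section
/- Let V ⊆ ℝ^d be a compact set, w : V → ℝ continuous and nonnegative with zero set C nonempty, δ > 0, and w^δ the infimal convolution of w with parameter δ. Then for every y in the domain and all r > 0, sup_{y' ∈ B_r(y)} (w^δ(y') − w^δ(y)) ≤ (r²/2 + dist(y,C)·r)/δ, where the supremum is over y' in the domain. -/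
open Metric Set

theorem stmt_5 {d : ℕ} (V : Set (EuclideanSpace ℝ (Fin d)))
    (hV : IsCompact V)
    (w : EuclideanSpace ℝ (Fin d) → ℝ)
    (hwc : ContinuousOn w V)
    (hw : ∀ y ∈ V, 0 ≤ w y)
    (hC : {z ∈ V | w z = 0}.Nonempty)
    (δ : ℝ) (hδ : 0 < δ) :
    ∀ y ∈ V, ∀ r > (0 : ℝ), ∀ y' ∈ V, y' ∈ Metric.ball y r →
      infConv V w δ y' - infConv V w δ y
        ≤ (r ^ 2 / 2 + Metric.infDist y {z ∈ V | w z = 0} * r) / δ := by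
  intro y hy r hr y' hy' hball
  set C : Set (EuclideanSpace ℝ (Fin d)) := {z ∈ V | w z = 0} with hCdef
  have hVne : V.Nonempty := ⟨hC.choose, hC.choose_spec.1⟩
  -- continuity of objective at y
  have hfc : ContinuousOn (fun z => w z + ‖y - z‖ ^ 2 / (2 * δ)) V := by
    apply hwc.add
    exact (((continuous_const.sub continuous_id).norm.pow 2).div_const _).continuousOn
  have hfc' : ContinuousOn (fun z => w z + ‖y' - z‖ ^ 2 / (2 * δ)) V := by
    apply hwc.add
    exact (((continuous_const.sub continuous_id).norm.pow 2).div_const _).continuousOn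
  -- minimizer of objective at y
  obtain ⟨z, hz, hzmin⟩ := hV.exists_isMinOn hVne hfc
  have hinfy : infConv V w δ y = w z + ‖y - z‖ ^ 2 / (2 * δ) := by
    apply le_antisymm
    · exact csInf_le (hV.bddBelow_image hfc) ⟨z, hz, rfl⟩
    · apply le_csInf (hVne.image _)
      rintro b ⟨x, hx, rfl⟩
      exact hzmin hx
  -- C is compact
  have hCclosed : IsClosed C := by
    have : C = V ∩ w ⁻¹' {0} := by ext x; simp [hCdef]
    rw [this]
    exact hwc.preimage_isClosed_of_isClosed hV.isClosed isClosed_singleton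
  have hCcompact : IsCompact C := hV.of_isClosed_subset hCclosed (fun x hx => hx.1)
  obtain ⟨c, hc, hcd⟩ := hCcompact.exists_infDist_eq_dist hC y
  -- ‖y - z‖ ≤ dist y c
  have hzc : w z + ‖y - z‖ ^ 2 / (2 * δ) ≤ w c + ‖y - c‖ ^ 2 / (2 * δ) := hzmin hc.1
  have hwz : 0 ≤ w z := hw z hz
  have hwc0 : w c = 0 := hc.2
  have hnormsq : ‖y - z‖ ^ 2 ≤ ‖y - c‖ ^ 2 := by
    rw [hwc0] at hzc
    have h2δ : 0 < 2 * δ := by linarith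
    have hdiv : ‖y - z‖ ^ 2 / (2 * δ) ≤ ‖y - c‖ ^ 2 / (2 * δ) := by linarith
    exact (div_le_div_iff_of_pos_right h2δ).mp hdiv
  have hnorm : ‖y - z‖ ≤ dist y c := by
    rw [dist_eq_norm]
    exact (pow_le_pow_iff_left₀ (norm_nonneg _) (norm_nonneg _) (by norm_num)).mp hnormsq
  have hdistC : ‖y - z‖ ≤ Metric.infDist y C := by rw [hcd]; exact hnorm
  have hdist0 : 0 ≤ Metric.infDist y C := Metric.infDist_nonneg
  -- bound infConv at y'
  have hinfy' : infConv V w δ y' ≤ w z + ‖y' - z‖ ^ 2 / (2 * δ) :=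
    csInf_le (hV.bddBelow_image hfc') ⟨z, hz, rfl⟩
  have htri : ‖y' - z‖ ≤ ‖y - z‖ + r := by
    have : ‖y' - z‖ ≤ ‖y' - y‖ + ‖y - z‖ := by
      have := dist_triangle y' y z
      simpa [dist_eq_norm] using this
    have hb : ‖y' - y‖ < r := by rw [← dist_eq_norm]; exact hball
    linarith
  have hsq : ‖y' - z‖ ^ 2 ≤ (‖y - z‖ + r) ^ 2 := by
    apply sq_le_sq' _ htri
    have : 0 ≤ ‖y' - z‖ := norm_nonneg _
    nlinarith [norm_nonneg (y - z)]
  rw [hinfy]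
  have key : ‖y' - z‖ ^ 2 / (2 * δ) - ‖y - z‖ ^ 2 / (2 * δ)
      ≤ (r ^ 2 / 2 + Metric.infDist y C * r) / δ := by
    rw [div_sub_div_same, div_le_div_iff₀ (by linarith) hδ]
    nlinarith [mul_le_mul_of_nonneg_right hsq hδ.le,
      mul_le_mul_of_nonneg_right (mul_le_mul_of_nonneg_right hdistC hr.le) hδ.le,
      norm_nonneg (y - z), hr.le, hδ.le]
  linarith [hinfy', key]
end

section
/- Let w : ℝ^d → ℝ be semiconcave (i.e. y ↦ w(y) − |y|²/(2δ) is concave for some δ > 0). If w can be touched from below at a point y₀ by a differentiable function (i.e. there exists differentiable φ with φ ≤ w near y₀ and φ(y₀) = w(y₀)), then w is differentiable at y₀. -/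
/-!
Subtracting the quadratic `‖y‖² / (2δ)` from both `w` and `φ` reduces the claim to a concave
function `g` touched from below at `x` by a function `ψ` with derivative `L` at `x`. Along every
line through `x`, the slopes of `g` to the right of `x` are bounded by its slopes to the left,
which are in turn bounded by those of `ψ`; letting the left point tend to `x` shows that `L` is a
supergradient: `g y ≤ g x + L (y - x)`. Then `g` is squeezed between `ψ` and its tangent
hyperplane at `x`, both of which have derivative `L`.
-/

open Filter Topology

theorem ConcaveOn.slope_le_of_touches_below {s : Set ℝ} {h ψ : ℝ → ℝ} {a b m : ℝ}
    (hh : ConcaveOn ℝ s h) (hs : s ∈ 𝓝 a) (hb : b ∈ s) (hab : a < b)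
    (hψ : HasDerivAt ψ m a) (hle : ∀ᶠ t in 𝓝 a, ψ t ≤ h t) (heq : ψ a = h a) :
    (h b - h a) / (b - a) ≤ m := by
  refine ge_of_tendsto (hψ.tendsto_slope.mono_left (nhdsLT_le_nhdsNE a)) ?_
  filter_upwards [self_mem_nhdsWithin, nhdsWithin_le_nhds (hle.and hs)]
    with t (hta : t < a) ⟨hψt, hts⟩
  have hat : 0 < a - t := sub_pos.mpr hta
  calc (h b - h a) / (b - a) ≤ (h a - h t) / (a - t) := hh.slope_anti_adjacent hts hb hta hab
    _ ≤ (ψ a - ψ t) / (a - t) := by rw [heq]; gcongr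
    _ = slope ψ a t := by rw [slope_def_field, ← neg_div_neg_eq, neg_sub, neg_sub]

theorem ConcaveOn.le_add_of_touches_below {E : Type*} [NormedAddCommGroup E] [NormedSpace ℝ E]
    {s : Set E} {g ψ : E → ℝ} {L : E →L[ℝ] ℝ} {x y : E}
    (hg : ConcaveOn ℝ s g) (hs : s ∈ 𝓝 x) (hy : y ∈ s)
    (hψ : HasFDerivAt ψ L x) (hle : ∀ᶠ z in 𝓝 x, ψ z ≤ g z) (heq : ψ x = g x) :
    g y ≤ g x + L (y - x) := by
  set ℓ : ℝ →ᵃ[ℝ] E := AffineMap.lineMap x y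
  have hℓ : Tendsto ℓ (𝓝 0) (𝓝 x) := by
    simpa [ℓ] using AffineMap.lineMap_continuous.tendsto (0 : ℝ)
  have key := (hg.comp_affineMap ℓ).slope_le_of_touches_below (hℓ hs) (by simpa [ℓ] using hy)
    zero_lt_one (hψ.comp_hasDerivAt_of_eq 0 AffineMap.hasDerivAt_lineMap (by simp))
    (hℓ.eventually hle) (by simp [ℓ, heq])
  simp only [Function.comp_apply, ℓ, AffineMap.lineMap_apply_one, AffineMap.lineMap_apply_zero,
    sub_zero, div_one] at key
  linarith

theorem HasFDerivAt.of_touches_below_of_le_tangent {E : Type*} [NormedAddCommGroup E]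
    [NormedSpace ℝ E] {g ψ : E → ℝ} {L : E →L[ℝ] ℝ} {x : E}
    (hψ : HasFDerivAt ψ L x) (hle : ∀ᶠ y in 𝓝 x, ψ y ≤ g y) (heq : ψ x = g x)
    (hup : ∀ᶠ y in 𝓝 x, g y ≤ g x + L (y - x)) : HasFDerivAt g L x := by
  refine HasFDerivAt.of_isLittleO (Asymptotics.IsBigO.trans_isLittleO ?_ hψ.isLittleO)
  refine Asymptotics.IsBigO.of_bound 1 ?_
  filter_upwards [hle, hup] with y hψy hgy
  rw [one_mul, Real.norm_eq_abs, Real.norm_eq_abs, abs_of_nonpos (by linarith), heq]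
  exact le_trans (by linarith) (neg_le_abs _)

theorem ConcaveOn.hasFDerivAt_of_touches_below {E : Type*} [NormedAddCommGroup E]
    [NormedSpace ℝ E] {s : Set E} {g ψ : E → ℝ} {L : E →L[ℝ] ℝ} {x : E}
    (hg : ConcaveOn ℝ s g) (hs : s ∈ 𝓝 x)
    (hψ : HasFDerivAt ψ L x) (hle : ∀ᶠ y in 𝓝 x, ψ y ≤ g y) (heq : ψ x = g x) :
    HasFDerivAt g L x :=
  hψ.of_touches_below_of_le_tangent hle heq <| by
    filter_upwards [hs] with y hy using hg.le_add_of_touches_below hs hy hψ hle heq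

theorem stmt_16_general {d : ℕ} (δ : ℝ)
    (w : EuclideanSpace ℝ (Fin d) → ℝ)
    (hconc : ConcaveOn ℝ Set.univ (fun y => w y - ‖y‖ ^ 2 / (2 * δ)))
    (y₀ : EuclideanSpace ℝ (Fin d))
    (φ : EuclideanSpace ℝ (Fin d) → ℝ)
    (hφ : DifferentiableAt ℝ φ y₀)
    (htouch : φ y₀ = w y₀)
    (hle : ∀ᶠ y in nhds y₀, φ y ≤ w y) :
    DifferentiableAt ℝ w y₀ := by
  have hq : Differentiable ℝ (fun y : EuclideanSpace ℝ (Fin d) => ‖y‖ ^ 2 / (2 * δ)) := by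
    simpa [div_eq_mul_inv] using (differentiable_id.norm_sq ℝ).mul_const (2 * δ)⁻¹
  have hg := hconc.hasFDerivAt_of_touches_below
    (ψ := fun y => φ y - ‖y‖ ^ 2 / (2 * δ)) univ_mem (hφ.hasFDerivAt.sub (hq y₀).hasFDerivAt)
    (by filter_upwards [hle] with y hy using sub_le_sub_right hy _) (by rw [htouch])
  simpa [Pi.add_def] using (hg.add (hq y₀).hasFDerivAt).differentiableAt

theorem stmt_16 {d : ℕ} (δ : ℝ) (hδ : 0 < δ)
    (w : EuclideanSpace ℝ (Fin d) → ℝ)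
    (hconc : ConcaveOn ℝ Set.univ (fun y => w y - ‖y‖ ^ 2 / (2 * δ)))
    (y₀ : EuclideanSpace ℝ (Fin d))
    (φ : EuclideanSpace ℝ (Fin d) → ℝ)
    (hφ : DifferentiableAt ℝ φ y₀)
    (htouch : φ y₀ = w y₀)
    (hle : ∀ᶠ y in nhds y₀, φ y ≤ w y) :
    DifferentiableAt ℝ w y₀ :=
  stmt_16_general δ w hconc y₀ φ hφ htouch hle
end
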